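/- arXiv:2209.04728 — 6 statements merged into one kernel-verified Lean document; each statement's English description precedes it below -/
import Mathlib

section
/- Fix μ > 0, ε > 0, κ > 0 and r > q > 2. Define G : ℝ² → ℝ² by G(V) = V + μ(ε|V|^{r-2}V + κ|V|^{q-2}V). Then the Jacobian determinant of G at every V ∈ ℝ² equals (1 + μ(ε|V|^{r-2} + κ|V|^{q-2}))·(1 + μ(ε(r-1)|V|^{r-2} + κ(q-1)|V|^{q-2})), which is strictly positive. -/
/-
The map `W ↦ ‖W‖ ^ p • W` (`p > 0`) has derivative `‖V‖ ^ p • id + p ‖V‖ ^ (p - 2) ⟪V, ·⟫ V`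
at every `V` (including `V = 0`, where both terms vanish). Hence `DG(V) = a • id + b ⟪V, ·⟫ V`
with `a > 0`, which is `a` times the transvection `w ↦ w + (b / a) ⟪V, w⟫ V` of determinant
`1 + b ‖V‖² / a`. In dimension two this gives `a (a + b ‖V‖²)`, and
`b ‖V‖² = μ (ε (r - 2) ‖V‖ ^ (r - 2) + κ (q - 2) ‖V‖ ^ (q - 2))`.
-/

/-- `G(V) = V + μ(ε|V|^{r-2}V + κ|V|^{q-2}V)` on ℝ². -/
noncomputable def Gmap (μ ε κ r q : ℝ) : EuclideanSpace ℝ (Fin 2) → EuclideanSpace ℝ (Fin 2) :=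
  fun V => V + μ • (ε • (‖V‖ ^ (r - 2) • V) + κ • (‖V‖ ^ (q - 2) • V))

theorem LinearMap.det_smul_id_add_smulRight {K M : Type*} [Field K] [AddCommGroup M] [Module K M]
    [FiniteDimensional K M] {a : K} (ha : a ≠ 0) (f : Module.Dual K M) (v : M) :
    LinearMap.det (a • LinearMap.id + f.smulRight v) = a ^ Module.finrank K M * (1 + f v / a) := by
  have : a • LinearMap.id + f.smulRight v = a • LinearMap.transvection (a⁻¹ • f) v := by
    ext x
    simp [LinearMap.transvection.apply, smul_add, smul_smul, ha]
  rw [this, LinearMap.det_smul, LinearMap.transvection.det]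
  simp [div_eq_inv_mul]

section
variable {E : Type*} [NormedAddCommGroup E] [InnerProductSpace ℝ E]

theorem hasFDerivAt_norm_rpow_of_ne_zero {V : E} (hV : V ≠ 0) (p : ℝ) :
    HasFDerivAt (fun W : E => ‖W‖ ^ p) ((p * ‖V‖ ^ (p - 2)) • innerSL ℝ V) V := by
  convert ((hasStrictFDerivAt_norm_sq V).rpow_const (p := p / 2) (by simp [hV])).hasFDerivAt
    using 1
  · ext W; rw [← Real.rpow_natCast_mul (norm_nonneg _)]; ring_nf
  · simp_rw [← Real.rpow_natCast_mul (norm_nonneg _), ← Nat.cast_smul_eq_nsmul ℝ, smul_smul]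
    ring_nf

theorem hasFDerivAt_norm_rpow_smul_self (V : E) {p : ℝ} (hp : 0 < p) :
    HasFDerivAt (fun W : E => ‖W‖ ^ p • W)
      (‖V‖ ^ p • ContinuousLinearMap.id ℝ E
        + ((p * ‖V‖ ^ (p - 2)) • innerSL ℝ V).smulRight V) V := by
  rcases eq_or_ne V 0 with rfl | hV
  · simp only [norm_zero, Real.zero_rpow hp.ne', zero_smul, map_zero, smul_zero,
      ContinuousLinearMap.smulRight_zero, add_zero]
    rw [hasFDerivAt_iff_isLittleO_nhds_zero]
    have hsmall : (fun W : E => ‖W‖ ^ p) =o[nhds 0] (fun _ => (1 : ℝ)) := by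
      rw [Asymptotics.isLittleO_one_iff]
      simpa [Real.zero_rpow hp.ne'] using
        (continuous_norm.rpow_const fun _ => Or.inr hp.le).tendsto (0 : E)
    simpa [Real.zero_rpow hp.ne'] using hsmall.smul_isBigO (Asymptotics.isBigO_refl id _)
  · exact (hasFDerivAt_norm_rpow_of_ne_zero hV p).smul (hasFDerivAt_id V)

end

theorem Real.rpow_sub_two_mul_sq {x : ℝ} (hx : 0 ≤ x) {p : ℝ} (hp : p ≠ 0) :
    x ^ (p - 2) * x ^ 2 = x ^ p := by
  rw [← Real.rpow_natCast, ← Real.rpow_add' hx (by simpa using hp)]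
  norm_num

theorem fderiv_Gmap {μ ε κ r q : ℝ} (hr : 2 < r) (hq : 2 < q) (V : EuclideanSpace ℝ (Fin 2)) :
    (fderiv ℝ (Gmap μ ε κ r q) V).toLinearMap
      = (1 + μ * (ε * ‖V‖ ^ (r - 2) + κ * ‖V‖ ^ (q - 2))) • LinearMap.id
        + ((μ * (ε * (r - 2) * ‖V‖ ^ (r - 2 - 2) + κ * (q - 2) * ‖V‖ ^ (q - 2 - 2)))
            • innerₛₗ ℝ V).smulRight V := by
  have hG : HasFDerivAt (Gmap μ ε κ r q) _ V := (hasFDerivAt_id V).add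
    ((((hasFDerivAt_norm_rpow_smul_self V (sub_pos.2 hr)).const_smul ε).add
      ((hasFDerivAt_norm_rpow_smul_self V (sub_pos.2 hq)).const_smul κ)).const_smul μ)
  rw [hG.fderiv]
  refine LinearMap.ext fun w => ?_
  simp only [ContinuousLinearMap.coe_coe, add_apply, smul_apply, ContinuousLinearMap.id_apply,
    ContinuousLinearMap.smulRight_apply, innerSL_apply_apply, LinearMap.add_apply,
    LinearMap.smul_apply, LinearMap.id_apply, LinearMap.smulRight_apply, innerₛₗ_apply_apply]
  match_scalars <;> ring

theorem stmt_3 (μ ε κ r q : ℝ) (hμ : 0 < μ) (hε : 0 < ε) (hκ : 0 < κ)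
    (hq : 2 < q) (hqr : q < r) (V : EuclideanSpace ℝ (Fin 2)) :
    LinearMap.det ((fderiv ℝ (Gmap μ ε κ r q) V).toLinearMap)
      = (1 + μ * (ε * ‖V‖ ^ (r - 2) + κ * ‖V‖ ^ (q - 2)))
        * (1 + μ * (ε * (r - 1) * ‖V‖ ^ (r - 2) + κ * (q - 1) * ‖V‖ ^ (q - 2)))
    ∧ 0 < (1 + μ * (ε * ‖V‖ ^ (r - 2) + κ * ‖V‖ ^ (q - 2)))
        * (1 + μ * (ε * (r - 1) * ‖V‖ ^ (r - 2) + κ * (q - 1) * ‖V‖ ^ (q - 2))) := by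
  have hr : 2 < r := hq.trans hqr
  have hr1 : 0 < r - 1 := by linarith
  have hq1 : 0 < q - 1 := by linarith
  have ha : 0 < 1 + μ * (ε * ‖V‖ ^ (r - 2) + κ * ‖V‖ ^ (q - 2)) := by positivity
  refine ⟨?_, by positivity⟩
  rw [fderiv_Gmap hr hq V, LinearMap.det_smul_id_add_smulRight ha.ne', finrank_euclideanSpace_fin]
  simp only [LinearMap.smul_apply, innerₛₗ_apply_apply, real_inner_self_eq_norm_sq, smul_eq_mul]
  have er := Real.rpow_sub_two_mul_sq (norm_nonneg V) (sub_pos.2 hr).ne'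
  have eq := Real.rpow_sub_two_mul_sq (norm_nonneg V) (sub_pos.2 hq).ne'
  field_simp
  linear_combination (μ * ε * (r - 2)) * er + (μ * κ * (q - 2)) * eq
end

section
/- Let λ, κ > 0, α, β ∈ ℝ and c > 0, and suppose (α/λ, β/κ) lies in the CGL region CGL(c⁻¹), i.e. either (α/λ)(β/κ) ≥ 0 or (|α/λ|·|β/κ| − 1)/(|α/λ| + |β/κ|) < c⁻¹. Then there exists δ ≠ 0 such that J(δ) := 2δ√((1 + c⁻²)λκ) + c⁻¹(δ²κ + λ) − |δ²β − α| > 0. -/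
/-!
With `a = α/λ`, `b = β/κ` and `δ = t √(λ/κ)` one gets
`J(δ) = λ (2t√(1 + r²) + r(t² + 1) - |t²b - a|)` for `r = c⁻¹`. If `ab > 0`, the choice
`t² = a/b` kills the absolute value. Otherwise `|t²b - a| ≤ t²|b| + |a|`, and it suffices that the
quadratic `(r - |b|)t² + 2√(1 + r²)t + (r - |a|)` is positive for some `t > 0`; its discriminant
is positive exactly when `|a||b| - 1 < r(|a| + |b|)`, which is the defining condition of the CGL
region.
-/

def cglRegion (r : ℝ) : Set (ℝ × ℝ) :=
  {z | z.1 * z.2 ≥ 0 ∨ (|z.1| * |z.2| - 1) / (|z.1| + |z.2|) < r}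

lemma exists_pos_quadratic_pos {A B C : ℝ} (hB : 0 < B) (h : 4 * A * C < B ^ 2) :
    ∃ t > 0, 0 < A * t ^ 2 + B * t + C := by
  rcases lt_or_ge A 0 with hA | hA
  · have hA0 : A ≠ 0 := hA.ne
    refine ⟨-B / (2 * A), div_pos_of_neg_of_neg (by linarith) (by linarith), ?_⟩
    have hvertex :
        A * (-B / (2 * A)) ^ 2 + B * (-B / (2 * A)) + C = (4 * A * C - B ^ 2) / (4 * A) := by
      field_simp
      ring
    rw [hvertex]
    exact div_pos_of_neg_of_neg (by linarith) (by linarith)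
  · refine ⟨(|C| + 1) / B, by positivity, ?_⟩
    have hlin : B * ((|C| + 1) / B) = |C| + 1 := by field_simp
    nlinarith [neg_abs_le C, mul_nonneg hA (sq_nonneg ((|C| + 1) / B))]

lemma abs_mul_abs_sub_one_lt_of_mem_cglRegion {r a b : ℝ} (hr : 0 ≤ r) (h : (a, b) ∈ cglRegion r)
    (hab : a * b ≤ 0) : |a| * |b| - 1 < r * (|a| + |b|) := by
  by_cases h0 : |a| * |b| = 0
  · nlinarith [abs_nonneg a, abs_nonneg b]
  · have hsum : 0 < |a| + |b| := by
      rcases mul_ne_zero_iff.mp h0 with ⟨ha, -⟩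
      positivity
    have hneg : a * b < 0 := lt_of_le_of_ne hab (by simpa using h0)
    rcases h with h | h
    · exact absurd h (not_le.mpr hneg)
    · exact (div_lt_iff₀ hsum).mp h

lemma exists_pos_abs_sub_lt_of_mem_cglRegion {r a b : ℝ} (hr : 0 < r) (h : (a, b) ∈ cglRegion r) :
    ∃ t > 0, |t ^ 2 * b - a| < 2 * t * √(1 + r ^ 2) + r * (t ^ 2 + 1) := by
  have hB : 0 < 2 * √(1 + r ^ 2) := by positivity
  by_cases hab : 0 < a * b
  · have hb : b ≠ 0 := by rintro rfl; simp at hab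
    have hquot : 0 < a / b := by
      rw [← mul_div_mul_right a b hb]
      exact div_pos hab (mul_self_pos.mpr hb)
    refine ⟨√(a / b), Real.sqrt_pos.mpr hquot, ?_⟩
    rw [Real.sq_sqrt hquot.le, div_mul_cancel₀ a hb, sub_self, abs_zero]
    positivity
  · have hdisc := abs_mul_abs_sub_one_lt_of_mem_cglRegion hr.le h (not_lt.mp hab)
    have hB2 : (2 * √(1 + r ^ 2)) ^ 2 = 4 * (1 + r ^ 2) := by
      rw [mul_pow, Real.sq_sqrt (by positivity)]
      norm_num
    obtain ⟨t, ht, hq⟩ := exists_pos_quadratic_pos (A := r - |b|) (C := r - |a|) hB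
      (by rw [hB2]; nlinarith)
    refine ⟨t, ht, ?_⟩
    calc |t ^ 2 * b - a| ≤ t ^ 2 * |b| + |a| :=
          (abs_sub _ _).trans_eq (by rw [abs_mul, abs_of_nonneg (sq_nonneg t)])
      _ < 2 * t * √(1 + r ^ 2) + r * (t ^ 2 + 1) := by linarith

lemma cgl_J_rescale {lam kap : ℝ} (hlam : 0 < lam) (hkap : 0 < kap) (r α β t : ℝ) :
    2 * (t * √(lam / kap)) * √((1 + r ^ 2) * lam * kap)
        + r * ((t * √(lam / kap)) ^ 2 * kap + lam) - |(t * √(lam / kap)) ^ 2 * β - α|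
      = lam * (2 * t * √(1 + r ^ 2) + r * (t ^ 2 + 1) - |t ^ 2 * (β / kap) - α / lam|) := by
  have hsq : (t * √(lam / kap)) ^ 2 = t ^ 2 * lam / kap := by
    rw [mul_pow, Real.sq_sqrt (by positivity), mul_div_assoc]
  have hroot : √(lam / kap) * √((1 + r ^ 2) * lam * kap) = lam * √(1 + r ^ 2) := by
    rw [← Real.sqrt_mul (by positivity),
      show lam / kap * ((1 + r ^ 2) * lam * kap) = lam ^ 2 * (1 + r ^ 2) by field_simp,
      Real.sqrt_mul (by positivity), Real.sqrt_sq hlam.le]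
  have habs : |t ^ 2 * lam / kap * β - α| = lam * |t ^ 2 * (β / kap) - α / lam| := by
    rw [← abs_of_pos hlam, ← abs_mul, abs_of_pos hlam]
    congr 1
    field_simp
  rw [hsq, habs, show 2 * (t * √(lam / kap)) * √((1 + r ^ 2) * lam * kap)
    = 2 * t * (√(lam / kap) * √((1 + r ^ 2) * lam * kap)) by ring, hroot]
  field_simp

theorem stmt_7 (lam kap α β c : ℝ) (hlam : 0 < lam) (hkap : 0 < kap) (hc : 0 < c)
    (hCGL : (α / lam) * (β / kap) ≥ 0 ∨
      (|α / lam| * |β / kap| - 1) / (|α / lam| + |β / kap|) < c⁻¹) :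
    ∃ δ : ℝ, δ ≠ 0 ∧
      0 < 2 * δ * Real.sqrt ((1 + c⁻¹ ^ 2) * lam * kap)
          + c⁻¹ * (δ ^ 2 * kap + lam) - |δ ^ 2 * β - α| := by
  obtain ⟨t, ht, hgain⟩ :=
    exists_pos_abs_sub_lt_of_mem_cglRegion (inv_pos.mpr hc) (a := α / lam) (b := β / kap) hCGL
  refine ⟨t * √(lam / kap), by positivity, ?_⟩
  rw [cgl_J_rescale hlam hkap]
  exact mul_pos hlam (by linarith)
end

section
/- Let λ, κ > 0 and c > 0, and let α, β ∈ ℝ with αβ ≤ 0, c⁻¹ < |β|/κ, and (|α|/λ)(|β|/κ) − 1 < c⁻¹(|α|/λ + |β|/κ). Then the discriminant condition (1 + c⁻²)λκ − (c⁻¹κ − |β|)(c⁻¹λ − |α|) > 0 holds, and consequently the quadratic δ ↦ (c⁻¹κ − |β|)δ² + 2δ√((1 + c⁻²)λκ) + (c⁻¹λ − |α|) takes a strictly positive value at some δ > 0. -/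
/-!
Multiplying the CGL-region inequality by `λκ` turns it into the positivity of the discriminant
`D = s² - ab` of the quadratic `aδ² + 2sδ + b`, where `s = √((1 + c⁻²)λκ)`. Since `a = c⁻¹κ - |β| < 0`,
the value at the vertex `δ = s / (-a) > 0` is `D / (-a) > 0`.
-/

theorem exists_pos_quadratic_pos_s8 {K : Type*} [Field K] [LinearOrder K] [IsStrictOrderedRing K]
    {a b s : K} (ha : a < 0) (hs : 0 < s) (hdisc : a * b < s ^ 2) :
    ∃ δ : K, 0 < δ ∧ 0 < a * δ ^ 2 + 2 * δ * s + b := by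
  have hna : 0 < -a := neg_pos.mpr ha
  refine ⟨s / -a, div_pos hs hna, ?_⟩
  have vertex : a * (s / -a) ^ 2 + 2 * (s / -a) * s + b = (s ^ 2 - a * b) / -a := by
    field_simp [ha.ne]
    ring
  rw [vertex]
  exact div_pos (sub_pos.mpr hdisc) hna

theorem discriminant_pos_of_cgl {lam kap A B t : ℝ} (hlam : 0 < lam) (hkap : 0 < kap)
    (hCGL : (A / lam) * (B / kap) - 1 < t * (A / lam + B / kap)) :
    0 < (1 + t ^ 2) * lam * kap - (t * kap - B) * (t * lam - A) := by
  have factor : (1 + t ^ 2) * lam * kap - (t * kap - B) * (t * lam - A)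
      = lam * kap * (t * (A / lam + B / kap) - ((A / lam) * (B / kap) - 1)) := by
    field_simp
    ring
  rw [factor]
  exact mul_pos (mul_pos hlam hkap) (sub_pos.mpr hCGL)

theorem stmt_8_general (lam kap α β c : ℝ) (hlam : 0 < lam) (hkap : 0 < kap)
    (hβ : c⁻¹ < |β| / kap)
    (hCGL : (|α| / lam) * (|β| / kap) - 1 < c⁻¹ * (|α| / lam + |β| / kap)) :
    0 < (1 + c⁻¹ ^ 2) * lam * kap - (c⁻¹ * kap - |β|) * (c⁻¹ * lam - |α|) ∧
    ∃ δ : ℝ, 0 < δ ∧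
      0 < (c⁻¹ * kap - |β|) * δ ^ 2 + 2 * δ * Real.sqrt ((1 + c⁻¹ ^ 2) * lam * kap)
          + (c⁻¹ * lam - |α|) := by
  have hD := discriminant_pos_of_cgl hlam hkap hCGL
  refine ⟨hD, exists_pos_quadratic_pos_s8 ?_ ?_ ?_⟩
  · exact sub_neg.mpr ((lt_div_iff₀ hkap).mp hβ)
  · exact Real.sqrt_pos.mpr (by positivity)
  · rw [Real.sq_sqrt (by positivity)]
    linarith

theorem stmt_8 (lam kap α β c : ℝ) (hlam : 0 < lam) (hkap : 0 < kap) (hc : 0 < c)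
    (hαβ : α * β ≤ 0) (hβ : c⁻¹ < |β| / kap)
    (hCGL : (|α| / lam) * (|β| / kap) - 1 < c⁻¹ * (|α| / lam + |β| / kap)) :
    0 < (1 + c⁻¹ ^ 2) * lam * kap - (c⁻¹ * kap - |β|) * (c⁻¹ * lam - |α|) ∧
    ∃ δ : ℝ, 0 < δ ∧
      0 < (c⁻¹ * kap - |β|) * δ ^ 2 + 2 * δ * Real.sqrt ((1 + c⁻¹ ^ 2) * lam * kap)
          + (c⁻¹ * lam - |α|) :=
  stmt_8_general lam kap α β c hlam hkap hβ hCGL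
end

section
/- Let T > 0, r > 2, and let y : [0,T] → [0,∞) be absolutely continuous with y(0) = y(T), satisfying the differential inequality (1/2)y'(t) + c·y(t)^{r/2} ≤ g(t) for a.e. t ∈ (0,T), where c > 0 and g ∈ L¹(0,T), g ≥ 0. Then max_{[0,T]} y ≤ min_{[0,T]} y + 2∫₀ᵀ g(t)dt, and min_{[0,T]} y ≤ ((1/(cT))∫₀ᵀ g(t)dt)^{2/r}. Consequently sup_{[0,T]} y ≤ ((1/(cT))∫₀ᵀ g dt)^{2/r} + 2∫₀ᵀ g dt. -/
/-!
Dropping the nonnegative coercive term leaves `y' ≤ 2 g`, so every rise of `y` is bounded by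
`2 ∫ g`; by periodicity one can wrap around the period, so this holds for any pair of times and
bounds the oscillation `max y - min y`. Integrating the full inequality over a period kills the
derivative term, so `c ∫ y ^ (r/2) ≤ ∫ g`, while `y ^ (r/2) ≥ (min y) ^ (r/2)` pointwise.
-/

open MeasureTheory Set intervalIntegral

section DerivBounds

variable {f f' h : ℝ → ℝ} {a b s t : ℝ}

theorem IntervalIntegrable.mono_Icc {μ : Measure ℝ} (hf : IntervalIntegrable f μ a b)
    (hs : s ∈ Icc a b) (ht : t ∈ Icc a b) : IntervalIntegrable f μ s t :=
  hf.mono_set ((uIcc_subset_Icc hs ht).trans Icc_subset_uIcc)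

theorem integral_eq_sub_of_hasDerivWithinAt_Icc
    (hderiv : ∀ x ∈ Icc a b, HasDerivWithinAt f (f' x) (Icc a b) x)
    (hf' : IntervalIntegrable f' volume a b) (hs : s ∈ Icc a b) (ht : t ∈ Icc a b)
    (hst : s ≤ t) : ∫ x in s..t, f' x = f t - f s := by
  have hsub : Icc s t ⊆ Icc a b := Icc_subset_Icc hs.1 ht.2
  refine integral_eq_sub_of_hasDeriv_right_of_le hst
    (fun x hx ↦ (hderiv x (hsub hx)).continuousWithinAt.mono hsub) (fun x hx ↦ ?_)
    (hf'.mono_Icc hs ht)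
  exact (hderiv x (hsub (Ioo_subset_Icc_self hx))).mono_of_mem_nhdsWithin
    (Icc_mem_nhdsGT_of_mem ⟨hs.1.trans hx.1.le, hx.2.trans_le ht.2⟩)

theorem sub_le_integral_of_hasDerivWithinAt_Icc_of_ae_le
    (hderiv : ∀ x ∈ Icc a b, HasDerivWithinAt f (f' x) (Icc a b) x)
    (hf' : IntervalIntegrable f' volume a b) (hh : IntervalIntegrable h volume a b)
    (hle : ∀ᵐ x ∂volume.restrict (Icc a b), f' x ≤ h x)
    (hs : s ∈ Icc a b) (ht : t ∈ Icc a b) (hst : s ≤ t) :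
    f t - f s ≤ ∫ x in s..t, h x := by
  rw [← integral_eq_sub_of_hasDerivWithinAt_Icc hderiv hf' hs ht hst]
  exact integral_mono_ae_restrict hst (hf'.mono_Icc hs ht) (hh.mono_Icc hs ht)
    (ae_restrict_of_ae_restrict_of_subset (Icc_subset_Icc hs.1 ht.2) hle)

/-- On a period, the rise `f t - f s` is bounded by the whole integral of `h` even when `t < s`:
go from `s` up to `b`, jump back to `a` by periodicity, and climb to `t`. -/
theorem sub_le_integral_of_hasDerivWithinAt_Icc_of_ae_le_of_eq
    (hderiv : ∀ x ∈ Icc a b, HasDerivWithinAt f (f' x) (Icc a b) x)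
    (hf' : IntervalIntegrable f' volume a b) (hh : IntervalIntegrable h volume a b)
    (hh0 : ∀ x ∈ Icc a b, 0 ≤ h x) (hle : ∀ᵐ x ∂volume.restrict (Icc a b), f' x ≤ h x)
    (hper : f a = f b) (hs : s ∈ Icc a b) (ht : t ∈ Icc a b) :
    f t - f s ≤ ∫ x in a..b, h x := by
  have hab : a ≤ b := hs.1.trans hs.2
  have ha : a ∈ Icc a b := left_mem_Icc.2 hab
  have hb : b ∈ Icc a b := right_mem_Icc.2 hab
  have hh0' : 0 ≤ᵐ[volume.restrict (Ioc a b)] h :=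
    (ae_restrict_iff' measurableSet_Ioc).2 <| .of_forall fun x hx ↦ hh0 x (Ioc_subset_Icc_self hx)
  rcases le_total s t with hst | hts
  · exact (sub_le_integral_of_hasDerivWithinAt_Icc_of_ae_le hderiv hf' hh hle hs ht hst).trans
      (integral_mono_interval hs.1 hst ht.2 hh0' hh)
  · have hrise_t := sub_le_integral_of_hasDerivWithinAt_Icc_of_ae_le hderiv hf' hh hle ha ht ht.1
    have hrise_s := sub_le_integral_of_hasDerivWithinAt_Icc_of_ae_le hderiv hf' hh hle hs hb hs.2
    have hsplit := integral_add_adjacent_intervals (hh.mono_Icc ha ht)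
      ((hh.mono_Icc ht hs).trans (hh.mono_Icc hs hb))
    rw [← integral_add_adjacent_intervals (hh.mono_Icc ht hs) (hh.mono_Icc hs hb)] at hsplit
    have hmid : 0 ≤ ∫ x in t..s, h x :=
      integral_nonneg hts fun x hx ↦ hh0 x ⟨ht.1.trans hx.1, hx.2.trans hs.2⟩
    linarith

end DerivBounds

theorem sSup_image_le_sInf_image_add {α : Type*} {f : α → ℝ} {S : Set α} {C : ℝ}
    (hS : S.Nonempty) (hosc : ∀ s ∈ S, ∀ t ∈ S, f t - f s ≤ C) :
    sSup (f '' S) ≤ sInf (f '' S) + C := by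
  refine csSup_le (hS.image f) ?_
  rintro _ ⟨t, ht, rfl⟩
  rw [← sub_le_iff_le_add]
  refine le_csInf (hS.image f) ?_
  rintro _ ⟨s, hs, rfl⟩
  linarith [hosc s hs t ht]

theorem mul_sInf_image_rpow_le_integral {y : ℝ → ℝ} {a b p : ℝ} (hab : a ≤ b)
    (hy : ContinuousOn y (Icc a b)) (hy0 : ∀ x ∈ Icc a b, 0 ≤ y x) (hp : 0 ≤ p) :
    (b - a) * sInf (y '' Icc a b) ^ p ≤ ∫ x in a..b, y x ^ p := by
  have hinf0 : 0 ≤ sInf (y '' Icc a b) := Real.sInf_nonneg (forall_mem_image.2 hy0)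
  have hinf_le : ∀ x ∈ Icc a b, sInf (y '' Icc a b) ≤ y x := fun x hx ↦
    csInf_le ⟨0, forall_mem_image.2 hy0⟩ (mem_image_of_mem y hx)
  have hint : IntervalIntegrable (fun x ↦ y x ^ p) volume a b :=
    ((hy.rpow_const fun _ _ ↦ Or.inr hp).mono (uIcc_of_le hab).subset).intervalIntegrable
  simpa using integral_mono_on hab intervalIntegrable_const hint fun x hx ↦
    Real.rpow_le_rpow hinf0 (hinf_le x hx) hp

theorem integral_le_of_mul_deriv_add_le_of_eq {y y' φ g : ℝ → ℝ} {a b k : ℝ} (hab : a ≤ b)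
    (hderiv : ∀ x ∈ Icc a b, HasDerivWithinAt y (y' x) (Icc a b) x)
    (hy' : IntervalIntegrable y' volume a b) (hφ : IntervalIntegrable φ volume a b)
    (hg : IntervalIntegrable g volume a b)
    (hle : ∀ᵐ x ∂volume.restrict (Icc a b), k * y' x + φ x ≤ g x) (hper : y a = y b) :
    ∫ x in a..b, φ x ≤ ∫ x in a..b, g x := by
  have ha : a ∈ Icc a b := left_mem_Icc.2 hab
  have hb : b ∈ Icc a b := right_mem_Icc.2 hab
  have h := integral_mono_ae_restrict hab ((hy'.const_mul k).add hφ) hg hle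
  rwa [integral_add (hy'.const_mul k) hφ, intervalIntegral.integral_const_mul,
    integral_eq_sub_of_hasDerivWithinAt_Icc hderiv hy' ha hb hab, hper, sub_self, mul_zero,
    zero_add] at h

theorem stmt_12 (T r c : ℝ) (hT : 0 < T) (hr : 2 < r) (hc : 0 < c)
    (y y' g : ℝ → ℝ)
    (hy0 : ∀ t ∈ Icc 0 T, 0 ≤ y t)
    (hderiv : ∀ t ∈ Icc 0 T, HasDerivWithinAt y (y' t) (Icc 0 T) t)
    (hy'int : IntervalIntegrable y' volume 0 T)
    (hper : y 0 = y T)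
    (hg : IntervalIntegrable g volume 0 T) (hg0 : ∀ t ∈ Icc 0 T, 0 ≤ g t)
    (hineq : ∀ᵐ t ∂(volume.restrict (Ioo 0 T)),
      (1 / 2) * y' t + c * (y t) ^ (r / 2) ≤ g t) :
    sSup (y '' Icc 0 T) ≤ sInf (y '' Icc 0 T) + 2 * ∫ t in (0 : ℝ)..T, g t ∧
    sInf (y '' Icc 0 T) ≤ ((1 / (c * T)) * ∫ t in (0 : ℝ)..T, g t) ^ (2 / r) ∧
    sSup (y '' Icc 0 T)
      ≤ ((1 / (c * T)) * ∫ t in (0 : ℝ)..T, g t) ^ (2 / r) + 2 * ∫ t in (0 : ℝ)..T, g t := by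
  have hr2 : 0 < r / 2 := by linarith
  have hycont : ContinuousOn y (Icc 0 T) := fun t ht ↦ (hderiv t ht).continuousWithinAt
  have hineq' : ∀ᵐ t ∂volume.restrict (Icc 0 T), 1 / 2 * y' t + c * y t ^ (r / 2) ≤ g t := by
    rwa [← restrict_Ioo_eq_restrict_Icc]
  have hy'_le : ∀ᵐ t ∂volume.restrict (Icc 0 T), y' t ≤ 2 * g t := by
    filter_upwards [ae_restrict_mem measurableSet_Icc, hineq'] with t ht hle
    nlinarith [mul_nonneg hc.le (Real.rpow_nonneg (hy0 t ht) (r / 2))]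
  have hosc : sSup (y '' Icc 0 T) ≤ sInf (y '' Icc 0 T) + 2 * ∫ t in (0 : ℝ)..T, g t := by
    rw [← intervalIntegral.integral_const_mul]
    exact sSup_image_le_sInf_image_add ⟨0, left_mem_Icc.2 hT.le⟩ fun s hs t ht ↦
      sub_le_integral_of_hasDerivWithinAt_Icc_of_ae_le_of_eq hderiv hy'int (hg.const_mul 2)
        (fun x hx ↦ mul_nonneg zero_le_two (hg0 x hx)) hy'_le hper hs ht
  have hmin : sInf (y '' Icc 0 T) ^ (r / 2) ≤ 1 / (c * T) * ∫ t in (0 : ℝ)..T, g t := by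
    have hlow := mul_sInf_image_rpow_le_integral hT.le hycont hy0 hr2.le
    have hypow : IntervalIntegrable (fun t ↦ y t ^ (r / 2)) volume 0 T :=
      ((hycont.rpow_const fun _ _ ↦ Or.inr hr2.le).mono
        (uIcc_of_le hT.le).subset).intervalIntegrable
    have hup := integral_le_of_mul_deriv_add_le_of_eq hT.le hderiv hy'int
      (hypow.const_mul c) hg hineq' hper
    rw [intervalIntegral.integral_const_mul] at hup
    rw [one_div_mul_eq_div, le_div_iff₀ (mul_pos hc hT)]
    nlinarith
  have hinf : sInf (y '' Icc 0 T) ≤ (1 / (c * T) * ∫ t in (0 : ℝ)..T, g t) ^ (2 / r) := by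
    rw [← inv_div r 2, Real.le_rpow_inv_iff_of_pos (Real.sInf_nonneg (forall_mem_image.2 hy0))
      (mul_nonneg (by positivity) (integral_nonneg hT.le hg0)) hr2]
    exact hmin
  exact ⟨hosc, hinf, hosc.trans (by linarith)⟩
end

section
/- Let T > 0 and let y : [0,T] → [0,∞) be absolutely continuous with y(0) = y(T), satisfying y'(t) + h(t) + 2y(t) ≤ g(t) for a.e. t, where h ≥ 0, h ∈ L¹(0,T), and g ∈ L¹(0,T), g ≥ 0. Then max_{[0,T]} y ≤ (1 + 1/(2T)) ∫₀ᵀ g(t) dt and ∫₀ᵀ h(t) dt ≤ ∫₀ᵀ g(t) dt. -/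
open MeasureTheory Set

theorem stmt_13 (T : ℝ) (hT : 0 < T) (y y' g h : ℝ → ℝ)
    (hy0 : ∀ t ∈ Icc 0 T, 0 ≤ y t)
    (hderiv : ∀ t ∈ Icc 0 T, HasDerivWithinAt y (y' t) (Icc 0 T) t)
    (hy'int : IntervalIntegrable y' volume 0 T)
    (hper : y 0 = y T)
    (hh : IntervalIntegrable h volume 0 T) (hh0 : ∀ t ∈ Icc 0 T, 0 ≤ h t)
    (hg : IntervalIntegrable g volume 0 T) (hg0 : ∀ t ∈ Icc 0 T, 0 ≤ g t)
    (hineq : ∀ᵐ t ∂(volume.restrict (Ioo 0 T)), y' t + h t + 2 * y t ≤ g t) :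
    (∀ t ∈ Icc 0 T, y t ≤ (1 + 1 / (2 * T)) * ∫ s in (0 : ℝ)..T, g s) ∧
    (∫ t in (0 : ℝ)..T, h t) ≤ ∫ t in (0 : ℝ)..T, g t := by
  have hcont : ContinuousOn y (Icc 0 T) := fun t ht => (hderiv t ht).continuousWithinAt
  have hyint : IntervalIntegrable y volume 0 T :=
    hcont.intervalIntegrable_of_Icc hT.le
  have hRIcc : volume.restrict (Ioo (0:ℝ) T) = volume.restrict (Icc 0 T) :=
    Measure.restrict_congr_set Ioo_ae_eq_Icc
  have hineqI : ∀ᵐ t ∂(volume.restrict (Icc (0:ℝ) T)), y' t + h t + 2 * y t ≤ g t := by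
    rw [← hRIcc]; exact hineq
  have hy'g : ∀ᵐ t ∂(volume.restrict (Icc (0:ℝ) T)), y' t ≤ g t := by
    filter_upwards [hineqI, ae_restrict_mem measurableSet_Icc] with t ht htm
    have := hh0 t htm; have := hy0 t htm; linarith
  -- integrability on subintervals
  have subInt : ∀ (f : ℝ → ℝ), IntervalIntegrable f volume 0 T → ∀ a b : ℝ,
      0 ≤ a → a ≤ b → b ≤ T → IntervalIntegrable f volume a b := by
    intro f hf a b ha hab hbT
    exact hf.mono_set (by rw [uIcc_of_le hab, uIcc_of_le hT.le]; exact Icc_subset_Icc ha hbT)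
  -- FTC
  have ftc : ∀ a b : ℝ, 0 ≤ a → a ≤ b → b ≤ T → ∫ s in a..b, y' s = y b - y a := by
    intro a b ha hab hbT
    apply intervalIntegral.integral_eq_sub_of_hasDeriv_right_of_le hab
    · exact hcont.mono (Icc_subset_Icc ha hbT)
    · intro x hx
      have hx0 : x ∈ Ioo (0:ℝ) T := ⟨lt_of_le_of_lt ha hx.1, lt_of_lt_of_le hx.2 hbT⟩
      have hx' : x ∈ Icc (0:ℝ) T := Ioo_subset_Icc_self hx0
      exact (hderiv x hx').mono_of_mem_nhdsWithin
        (nhdsWithin_le_nhds (Icc_mem_nhds hx0.1 hx0.2))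
    · exact subInt y' hy'int a b ha hab hbT
  -- g integral nonneg on subintervals
  have Ig : ∀ a b : ℝ, 0 ≤ a → a ≤ b → b ≤ T → 0 ≤ ∫ s in a..b, g s := by
    intro a b ha hab hbT
    apply intervalIntegral.integral_nonneg hab
    intro u hu; exact hg0 u ⟨le_trans ha hu.1, le_trans hu.2 hbT⟩
  -- key: y b ≤ y a + ∫ g over [a,b]
  have key : ∀ a b : ℝ, 0 ≤ a → a ≤ b → b ≤ T → y b ≤ y a + ∫ s in a..b, g s := by
    intro a b ha hab hbT
    have h1 : (∫ s in a..b, y' s) ≤ ∫ s in a..b, g s := by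
      apply intervalIntegral.integral_mono_ae_restrict hab
        (subInt y' hy'int a b ha hab hbT) (subInt g hg a b ha hab hbT)
      exact hy'g.filter_mono (ae_mono (Measure.restrict_mono (Icc_subset_Icc ha hbT) le_rfl))
    rw [ftc a b ha hab hbT] at h1
    linarith
  -- integrate the full inequality
  have hfullint : IntervalIntegrable (fun t => y' t + h t + 2 * y t) volume 0 T :=
    (hy'int.add hh).add (hyint.const_mul 2)
  have hmain : (∫ t in (0:ℝ)..T, (y' t + h t + 2 * y t)) ≤ ∫ t in (0:ℝ)..T, g t :=
    intervalIntegral.integral_mono_ae_restrict hT.le hfullint hg hineqI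
  have hsplit : (∫ t in (0:ℝ)..T, (y' t + h t + 2 * y t))
      = (∫ t in (0:ℝ)..T, y' t) + (∫ t in (0:ℝ)..T, h t) + 2 * ∫ t in (0:ℝ)..T, y t := by
    rw [intervalIntegral.integral_add (hy'int.add hh) (hyint.const_mul 2),
      intervalIntegral.integral_add hy'int hh,
      intervalIntegral.integral_const_mul]
  have hy'0 : (∫ t in (0:ℝ)..T, y' t) = 0 := by
    rw [ftc 0 T le_rfl hT.le le_rfl, hper]; ring
  have hynn : 0 ≤ ∫ t in (0:ℝ)..T, y t :=
    intervalIntegral.integral_nonneg hT.le (fun u hu => hy0 u hu)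
  have hhnn : 0 ≤ ∫ t in (0:ℝ)..T, h t :=
    intervalIntegral.integral_nonneg hT.le (fun u hu => hh0 u hu)
  have hhg : (∫ t in (0:ℝ)..T, h t) ≤ ∫ t in (0:ℝ)..T, g t := by
    rw [hsplit, hy'0] at hmain; linarith
  have h2y : 2 * (∫ t in (0:ℝ)..T, y t) ≤ ∫ t in (0:ℝ)..T, g t := by
    rw [hsplit, hy'0] at hmain; linarith
  -- minimum point
  obtain ⟨s₀, hs₀m, hs₀⟩ := isCompact_Icc.exists_isMinOn (nonempty_Icc.2 hT.le) hcont
  have hmin : T * y s₀ ≤ ∫ t in (0:ℝ)..T, y t := by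
    have : (∫ t in (0:ℝ)..T, (fun _ => y s₀) t) ≤ ∫ t in (0:ℝ)..T, y t :=
      intervalIntegral.integral_mono_on hT.le intervalIntegrable_const hyint
        (fun u hu => hs₀ hu)
    simpa [smul_eq_mul, mul_comm] using this
  have hys₀ : y s₀ ≤ (1 / (2 * T)) * ∫ s in (0:ℝ)..T, g s := by
    rw [div_mul_eq_mul_div, le_div_iff₀ (by linarith)]
    nlinarith
  refine ⟨?_, hhg⟩
  intro t ht
  have hbound : y t ≤ y s₀ + ∫ s in (0:ℝ)..T, g s := by
    rcases le_or_gt s₀ t with hst | hts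
    · have := key s₀ t hs₀m.1 hst ht.2
      have hsum : (∫ s in s₀..t, g s) ≤ ∫ s in (0:ℝ)..T, g s := by
        have e1 : (∫ s in (0:ℝ)..T, g s)
            = (∫ s in (0:ℝ)..s₀, g s) + (∫ s in s₀..t, g s) + (∫ s in t..T, g s) := by
          rw [intervalIntegral.integral_add_adjacent_intervals
              (subInt g hg 0 s₀ le_rfl hs₀m.1 hs₀m.2)
              (subInt g hg s₀ t hs₀m.1 hst ht.2),
            intervalIntegral.integral_add_adjacent_intervals
              (subInt g hg 0 t le_rfl ht.1 ht.2)
              (subInt g hg t T ht.1 ht.2 le_rfl)]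
        have n1 := Ig 0 s₀ le_rfl hs₀m.1 hs₀m.2
        have n2 := Ig t T ht.1 ht.2 le_rfl
        linarith
      linarith
    · have k1 := key 0 t le_rfl ht.1 ht.2
      have k2 := key s₀ T hs₀m.1 hs₀m.2 le_rfl
      rw [← hper] at k2
      have e1 : (∫ s in (0:ℝ)..T, g s)
          = (∫ s in (0:ℝ)..t, g s) + (∫ s in t..s₀, g s) + (∫ s in s₀..T, g s) := by
        rw [intervalIntegral.integral_add_adjacent_intervals
            (subInt g hg 0 t le_rfl ht.1 ht.2)
            (subInt g hg t s₀ ht.1 hts.le hs₀m.2),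
          intervalIntegral.integral_add_adjacent_intervals
            (subInt g hg 0 s₀ le_rfl hs₀m.1 hs₀m.2)
            (subInt g hg s₀ T hs₀m.1 hs₀m.2 le_rfl)]
      have n2 := Ig t s₀ ht.1 hts.le hs₀m.2
      linarith
  have := hys₀
  linarith
end

section
/- Let q > 2 and c_q = (q−2)/(2√(q−1)). Then for any V ∈ ℝ² \ {0}, all vectors p, s ∈ ℝ^N and all scalars v₁, v₂ with v₁² + v₂² = |V|², one has (q−2)|v₁v₂(|p|²−|s|²) − (v₁²−v₂²) p·s| ≤ c_q [ |V|²(|p|²+|s|²) + (q−2)(v₁p + v₂s)·(v₁p + v₂s) ]. -/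
open scoped RealInnerProductSpace

lemma aux_key (q K m w : ℝ) (hq : 2 < q) (hK0 : 0 ≤ K) (hle : m ^ 2 + w ^ 2 ≤ K ^ 2) :
    2 * Real.sqrt (q - 1) * |w| ≤ q * K + (q - 2) * m := by
  have ht0 : 0 ≤ Real.sqrt (q - 1) := Real.sqrt_nonneg _
  have ht : Real.sqrt (q - 1) ^ 2 = q - 1 := Real.sq_sqrt (by linarith)
  have hmK : -K ≤ m := by nlinarith [sq_nonneg w, sq_nonneg (m + K)]
  have hR : 0 ≤ q * K + (q - 2) * m := by nlinarith
  have hw2 : |w| ^ 2 = w ^ 2 := sq_abs w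
  have hsq : (2 * Real.sqrt (q - 1) * |w|) ^ 2 ≤ (q * K + (q - 2) * m) ^ 2 := by
    have h1 : (q * K + (q - 2) * m) ^ 2 - 4 * (q - 1) * w ^ 2 ≥
        ((q - 2) * K + q * m) ^ 2 := by nlinarith
    nlinarith
  nlinarith [mul_nonneg (mul_nonneg (by norm_num : (0:ℝ) ≤ 2) ht0) (abs_nonneg w)]

theorem stmt_18 {H : Type*} [NormedAddCommGroup H] [InnerProductSpace ℝ H]
    (q : ℝ) (hq : 2 < q) (v₁ v₂ : ℝ) (p s : H) :
    (q - 2) * |v₁ * v₂ * (‖p‖ ^ 2 - ‖s‖ ^ 2) - (v₁ ^ 2 - v₂ ^ 2) * ⟪p, s⟫|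
      ≤ (q - 2) / (2 * Real.sqrt (q - 1)) *
        ((v₁ ^ 2 + v₂ ^ 2) * (‖p‖ ^ 2 + ‖s‖ ^ 2) + (q - 2) * ‖v₁ • p + v₂ • s‖ ^ 2) := by
  have ht0 : 0 < Real.sqrt (q - 1) := Real.sqrt_pos.mpr (by linarith)
  have ht : Real.sqrt (q - 1) ^ 2 = q - 1 := Real.sq_sqrt (by linarith)
  have hexp : ‖v₁ • p + v₂ • s‖ ^ 2
      = v₁ ^ 2 * ‖p‖ ^ 2 + 2 * (v₁ * v₂) * ⟪p, s⟫ + v₂ ^ 2 * ‖s‖ ^ 2 := by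
    rw [norm_add_sq_real, real_inner_smul_left, real_inner_smul_right,
      norm_smul, norm_smul]
    simp only [Real.norm_eq_abs, mul_pow, sq_abs]
    ring
  have hcs : ⟪p, s⟫ * ⟪p, s⟫ ≤ ‖p‖ ^ 2 * ‖s‖ ^ 2 := by
    have := real_inner_mul_inner_self_le p s
    simpa [real_inner_self_eq_norm_sq] using this
  set K : ℝ := (v₁ ^ 2 + v₂ ^ 2) * (‖p‖ ^ 2 + ‖s‖ ^ 2) / 2 with hKdef
  set m : ℝ := ‖v₁ • p + v₂ • s‖ ^ 2 - K with hmdef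
  set w : ℝ := v₁ * v₂ * (‖p‖ ^ 2 - ‖s‖ ^ 2) - (v₁ ^ 2 - v₂ ^ 2) * ⟪p, s⟫ with hwdef
  have hK0 : 0 ≤ K := by positivity
  have hle : m ^ 2 + w ^ 2 ≤ K ^ 2 := by
    rw [hmdef, hwdef, hKdef, hexp]
    nlinarith [sq_nonneg (v₁ ^ 2 - v₂ ^ 2), sq_nonneg (v₁ * v₂), sq_nonneg (‖p‖ ^ 2 - ‖s‖ ^ 2),
      mul_nonneg (mul_nonneg (norm_nonneg p) (norm_nonneg p))
        (mul_nonneg (norm_nonneg s) (norm_nonneg s)),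
      sq_nonneg (v₁ ^ 2 + v₂ ^ 2)]
  have key := aux_key q K m w hq hK0 hle
  have hRHS : (v₁ ^ 2 + v₂ ^ 2) * (‖p‖ ^ 2 + ‖s‖ ^ 2) + (q - 2) * ‖v₁ • p + v₂ • s‖ ^ 2
      = q * K + (q - 2) * m := by rw [hmdef]; ring
  rw [hRHS, div_mul_eq_mul_div, le_div_iff₀ (by positivity)]
  have h2 : 0 ≤ q - 2 := by linarith
  calc (q - 2) * |w| * (2 * Real.sqrt (q - 1))
      = (q - 2) * (2 * Real.sqrt (q - 1) * |w|) := by ring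
    _ ≤ (q - 2) * (q * K + (q - 2) * m) := by
        exact mul_le_mul_of_nonneg_left key h2
end
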